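/- Let {s_a, p_A} be a representation of the labeled space (E,L,𝔅̄) in a C*-algebra such that p_C ≠ 0 for every nonempty C ∈ 𝔅̄. If α is a loop at A ∈ 𝔅̄ that has an exit, then p_A is an infinite projection. -/

import Mathlib

/-! # Common framework for labeled graph C*-algebras

Directed graphs, finite paths, labeled spaces `(E, L, 𝔅̄)` where `𝔅̄` is the
smallest accommodating set closed under relative complements (and containing
the sink parts of its members), loops and generalized loops, representations
of labeled spaces in C*-algebras, gauge actions, infinite projections,
AF algebras, and closed two-sided ideals. -/

noncomputable section

/-- A directed graph with vertex set `V` and edge set `E`. -/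
structure DirGraph (V : Type*) (E : Type*) where
  src : E → V
  rng : E → V

variable {V E 𝒜 : Type*}

/-- A (finite) path of positive length in a directed graph: a nonempty list of
composable edges. -/
structure GPath (G : DirGraph V E) where
  edges : List E
  ne : edges ≠ []
  chain : edges.Chain' fun e f => G.rng e = G.src f

namespace GPath

variable {G : DirGraph V E}

/-- The source vertex of a path. -/
def source (p : GPath G) : V := G.src (p.edges.head p.ne)

/-- The range vertex of a path. -/
def range (p : GPath G) : V := G.rng (p.edges.getLast p.ne)

/-- The length of a path. -/
def length (p : GPath G) : ℕ := p.edges.length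

/-- The label word of a path under a labeling `L`. -/
def label (L : E → 𝒜) (p : GPath G) : List 𝒜 := p.edges.map L

end GPath

/-- The set of sinks of a graph (vertices emitting no edge). -/
def DirGraph.sinks (G : DirGraph V E) : Set V := {v | ∀ e, G.src e ≠ v}

/-- `w ∈ L*(E)`: `w` is the label of some path of positive length. -/
def IsLabelWord (G : DirGraph V E) (L : E → 𝒜) (w : List 𝒜) : Prop :=
  ∃ p : GPath G, p.label L = w

/-- The range `r(w)` of a labeled path `w`. -/
def rngW (G : DirGraph V E) (L : E → 𝒜) (w : List 𝒜) : Set V :=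
  {v | ∃ p : GPath G, p.label L = w ∧ p.range = v}

/-- The relative range `r(A, w)` of a labeled path `w` with respect to `A`. -/
def relRng (G : DirGraph V E) (L : E → 𝒜) (A : Set V) (w : List 𝒜) : Set V :=
  {v | ∃ p : GPath G, p.label L = w ∧ p.source ∈ A ∧ p.range = v}

/-- `L(A E^n)`: labels of paths of length exactly `n` with source in `A`. -/
def labelsFromLen (G : DirGraph V E) (L : E → 𝒜) (A : Set V) (n : ℕ) : Set (List 𝒜) :=
  {w | ∃ p : GPath G, p.source ∈ A ∧ p.length = n ∧ p.label L = w}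

/-- `L(A E^{≤n})`: labels of paths of length between `1` and `n` with source in `A`. -/
def labelsFromLe (G : DirGraph V E) (L : E → 𝒜) (A : Set V) (n : ℕ) : Set (List 𝒜) :=
  {w | ∃ p : GPath G, p.source ∈ A ∧ p.length ≤ n ∧ p.label L = w}

/-- `L(A E^{≥n})`: labels of paths of length at least `n` (and at least `1`)
with source in `A`. -/
def labelsFromGe (G : DirGraph V E) (L : E → 𝒜) (A : Set V) (n : ℕ) : Set (List 𝒜) :=
  {w | ∃ p : GPath G, p.source ∈ A ∧ n ≤ p.length ∧ p.label L = w}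

/-- `L(E^n A)`: labels of paths of length exactly `n` with range in `A`. -/
def labelsToLen (G : DirGraph V E) (L : E → 𝒜) (n : ℕ) (A : Set V) : Set (List 𝒜) :=
  {w | ∃ p : GPath G, p.range ∈ A ∧ p.length = n ∧ p.label L = w}

/-- `L(E^{≤l} v)`: labels of paths of length between `1` and `l` with range `v`. -/
def labelsToLe (G : DirGraph V E) (L : E → 𝒜) (l : ℕ) (v : V) : Set (List 𝒜) :=
  {w | ∃ p : GPath G, p.range = v ∧ p.length ≤ l ∧ p.label L = w}

/-- `𝔅̄`: the smallest accommodating set for `(E, L)` (containing the ranges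
`r(α)` for `α ∈ L*(E)` and closed under relative ranges, finite intersections
and finite unions) that is moreover closed under relative complements and
contains `A_sk = A ∩ sinks` for every `A` belonging to it. -/
inductive Bbar (G : DirGraph V E) (L : E → 𝒜) : Set V → Prop
  | base (w : List 𝒜) (hw : IsLabelWord G L w) : Bbar G L (rngW G L w)
  | rel (A : Set V) (w : List 𝒜) (hA : Bbar G L A) (hw : IsLabelWord G L w) :
      Bbar G L (relRng G L A w)
  | inter (A B : Set V) (hA : Bbar G L A) (hB : Bbar G L B) : Bbar G L (A ∩ B)
  | union (A B : Set V) (hA : Bbar G L A) (hB : Bbar G L B) : Bbar G L (A ∪ B)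
  | diff (A B : Set V) (hA : Bbar G L A) (hB : Bbar G L B) : Bbar G L (A \ B)
  | sk (A : Set V) (hA : Bbar G L A) : Bbar G L (A ∩ G.sinks)

/-- The standing assumptions on a labeled space `(E, L, 𝔅̄)`: weakly
left-resolving, set-finite, receiver set-finite, and no sink is a source. -/
structure StandingAssumptions (G : DirGraph V E) (L : E → 𝒜) : Prop where
  wlr : ∀ A B : Set V, Bbar G L A → Bbar G L B → ∀ w : List 𝒜, IsLabelWord G L w →
    relRng G L A w ∩ relRng G L B w = relRng G L (A ∩ B) w
  setFinite : ∀ A : Set V, Bbar G L A → ∀ n : ℕ, 1 ≤ n → (labelsFromLen G L A n).Finite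
  receiverSetFinite : ∀ A : Set V, Bbar G L A → ∀ n : ℕ, 1 ≤ n → (labelsToLen G L n A).Finite
  sinkNotSource : ∀ v ∈ G.sinks, ∃ e, G.rng e = v

/-- The `n`-fold concatenation `w^n` of a word `w`. -/
def wordPow (w : List 𝒜) (n : ℕ) : List 𝒜 := (List.replicate n w).flatten

/-- A labeled path is repeatable if all its powers `w^n`, `n ≥ 1`, are again
labeled paths. -/
def Repeatable (G : DirGraph V E) (L : E → 𝒜) (w : List 𝒜) : Prop :=
  ∀ n : ℕ, 1 ≤ n → IsLabelWord G L (wordPow w n)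

/-- The generalized vertex `[v]_l`: all non-source vertices receiving exactly
the same labeled paths of length at most `l` as `v` does. -/
def gvtx (G : DirGraph V E) (L : E → 𝒜) (l : ℕ) (v : V) : Set V :=
  {u | (∃ e, G.rng e = u) ∧ labelsToLe G L l u = labelsToLe G L l v}

/-- A generalized loop at `A`: a labeled path `α ∈ L(A E^{≥1} A)`. -/
def IsGenLoop (G : DirGraph V E) (L : E → 𝒜) (A : Set V) (α : List 𝒜) : Prop :=
  ∃ p : GPath G, p.label L = α ∧ p.source ∈ A ∧ p.range ∈ A

/-- A loop at `A`: a generalized loop `α` at `A` such that `A ⊆ r(A, α)`. -/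
def IsLoop (G : DirGraph V E) (L : E → 𝒜) (A : Set V) (α : List 𝒜) : Prop :=
  IsGenLoop G L A α ∧ A ⊆ relRng G L A α

/-- The nonempty initial segments (initial paths) of a word `α`. -/
def initialSegs (α : List 𝒜) : Set (List 𝒜) := {w | w ≠ [] ∧ w <+: α}

/-- A loop `α` at `A` has an exit if (i) the initial segments of `α` form a
proper subset of `L(A E^{≤|α|})`, or (ii) `r(A, α_{[1,i]})` contains a sink for
some `1 ≤ i ≤ |α|`, or (iii) `A` is a proper subset of `r(A, α)`. -/
def HasExitLoop (G : DirGraph V E) (L : E → 𝒜) (A : Set V) (α : List 𝒜) : Prop :=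
  initialSegs α ⊂ labelsFromLe G L A α.length ∨
  (∃ k : ℕ, 1 ≤ k ∧ k ≤ α.length ∧ (relRng G L A (α.take k) ∩ G.sinks).Nonempty) ∨
  A ⊂ relRng G L A α

/-- `A_0 E^{≤K} A_1 ⋯ E^{≤K} A_m ≠ ∅`: existence of `m` consecutively
composable paths, each of length between `1` and `K`, the `j`-th going from
`As j` to `As (j+1)`. -/
def ChainExists (G : DirGraph V E) (As : ℕ → Set V) (K m : ℕ) : Prop :=
  ∃ xs : Fin m → GPath G,
    (∀ j : Fin m, (xs j).length ≤ K ∧ (xs j).source ∈ As j.val ∧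
      (xs j).range ∈ As (j.val + 1)) ∧
    ∀ (j : ℕ) (h : j + 1 < m),
      (xs ⟨j, Nat.lt_of_succ_lt h⟩).range = (xs ⟨j + 1, h⟩).source

/-- Same as `ChainExists` but with all paths of length exactly `K`
(i.e. `A_0 E^K A_1 ⋯ E^K A_m ≠ ∅`). -/
def ChainExistsExact (G : DirGraph V E) (As : ℕ → Set V) (K m : ℕ) : Prop :=
  ∃ xs : Fin m → GPath G,
    (∀ j : Fin m, (xs j).length = K ∧ (xs j).source ∈ As j.val ∧
      (xs j).range ∈ As (j.val + 1)) ∧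
    ∀ (j : ℕ) (h : j + 1 < m),
      (xs ⟨j, Nat.lt_of_succ_lt h⟩).range = (xs ⟨j + 1, h⟩).source

/-- Condition (a): for every finite family `A_1, …, A_N` in `𝔅̄` and every
`K ≥ 1` there is `m₀ ≥ 1` such that
`A_{i_1} E^{≤K} A_{i_2} ⋯ E^{≤K} A_{i_n} = ∅` (`n` sets, `n - 1` path factors)
for all `n > m₀` and all choices of indices. -/
def CondA (G : DirGraph V E) (L : E → 𝒜) : Prop :=
  ∀ (N : ℕ) (As : Fin N → Set V), (∀ i, Bbar G L (As i)) → ∀ K : ℕ, 1 ≤ K →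
    ∃ m0 : ℕ, 1 ≤ m0 ∧ ∀ n : ℕ, m0 < n → ∀ ι : ℕ → Fin N,
      ¬ ChainExists G (fun j => As (ι j)) K (n - 1)

/-- A word is agreeable (for level `l`) if it is of the form `β^k β'` with
`β, β' ∈ L(E^{≤l})` and `β'` a nonempty initial segment of `β`. -/
def AgreeableW (G : DirGraph V E) (L : E → 𝒜) (l : ℕ) (α : List 𝒜) : Prop :=
  ∃ (k : ℕ) (β β' : List 𝒜), IsLabelWord G L β ∧ IsLabelWord G L β' ∧
    β.length ≤ l ∧ β' ≠ [] ∧ β' <+: β ∧ α = wordPow β k ++ β'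

/-- A representation of the labeled space `(E, L, 𝔅̄)` in a (C*-)algebra `B`:
projections `p A`, `A ∈ 𝔅̄`, and partial isometries `s a`, `a ∈ 𝒜`, satisfying
the defining relations of a labeled graph C*-algebra. -/
structure LRep (G : DirGraph V E) (L : E → 𝒜) (B : Type*)
    [NonUnitalRing B] [StarRing B] where
  p : Set V → B
  s : 𝒜 → B
  p_empty : p ∅ = 0
  p_sa : ∀ A : Set V, Bbar G L A → star (p A) = p A
  p_mul : ∀ A A' : Set V, Bbar G L A → Bbar G L A' → p A * p A' = p (A ∩ A')
  p_union : ∀ A A' : Set V, Bbar G L A → Bbar G L A' →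
    p (A ∪ A') = p A + p A' - p (A ∩ A')
  s_pi : ∀ a : 𝒜, s a * star (s a) * s a = s a
  p_s : ∀ (A : Set V) (a : 𝒜), Bbar G L A → p A * s a = s a * p (relRng G L A [a])
  s_s : ∀ a : 𝒜, star (s a) * s a = p (rngW G L [a])
  s_orth : ∀ a b : 𝒜, a ≠ b → star (s a) * s b = 0
  ck : ∀ A : Set V, Bbar G L A →
    p A = (∑ᶠ a ∈ {a : 𝒜 | ∃ e, G.src e ∈ A ∧ L e = a},
      s a * p (relRng G L A [a]) * star (s a)) + p (A ∩ G.sinks)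

/-- `s_α` for a word `α`: the product of the partial isometries of its letters
(junk value `0` on the empty word, which is never used). -/
def sWord {B : Type*} [NonUnitalRing B] (s : 𝒜 → B) : List 𝒜 → B
  | [] => 0
  | [a] => s a
  | a :: b :: w => s a * sWord s (b :: w)

/-- The range of a word in `L^#(E)` (`none` is the empty word, with range all
of `E^0`). -/
def owordRng (G : DirGraph V E) (L : E → 𝒜) : Option (List 𝒜) → Set V
  | none => Set.univ
  | some w => rngW G L w

/-- The relative range of a word in `L^#(E)` with respect to `A` (`none` is
the empty word, with `r(A, ε) = A`). -/
def relRngE (G : DirGraph V E) (L : E → 𝒜) (A : Set V) : Option (List 𝒜) → Set V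
  | none => A
  | some w => relRng G L A w

/-- The element `s_α p_A s_β*` of a representation, where `α`, `β` are words in
`L^#(E)` (`none` being the empty word `ε` with `s_ε` the identity). -/
def LRep.elt {B : Type*} [NonUnitalRing B] [StarRing B] {G : DirGraph V E} {L : E → 𝒜}
    (rep : LRep G L B) : Option (List 𝒜) → Set V → Option (List 𝒜) → B
  | none, A, none => rep.p A
  | some α, A, none => sWord rep.s α * rep.p A
  | none, A, some β => rep.p A * star (sWord rep.s β)
  | some α, A, some β => sWord rep.s α * rep.p A * star (sWord rep.s β)

/-- A projection `q` is infinite if there is a partial isometry `u` with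
`u* u = q`, `u u* ≤ q` and `u u* ≠ q`. -/
def IsInfiniteProjection (B : Type*) [NonUnitalRing B] [StarRing B] [PartialOrder B]
    (q : B) : Prop :=
  star q = q ∧ q * q = q ∧ ∃ u : B, star u * u = q ∧ u * star u ≤ q ∧ u * star u ≠ q

/-- A C*-algebra is AF if every finite subset can be approximated within any
`ε > 0` from a finite-dimensional *-subalgebra. -/
def IsAFAlgebra (B : Type*) [NonUnitalNormedRing B] [StarRing B] [NormedSpace ℂ B] : Prop :=
  ∀ (F : Finset B) (ε : ℝ), 0 < ε →
    ∃ D : NonUnitalStarSubalgebra ℂ B, FiniteDimensional ℂ D ∧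
      ∀ x ∈ F, ∃ y ∈ (D : Set B), ‖x - y‖ < ε

/-- A gauge action for a representation: a strongly continuous action of the
circle group by *-automorphisms fixing the projections and scaling the
generating partial isometries. -/
structure GaugeAction {B : Type*} [NonUnitalCStarAlgebra B]
    (G : DirGraph V E) (L : E → 𝒜) (rep : LRep G L B) where
  γ : Circle → B ≃⋆ₐ[ℂ] B
  γ_mul : ∀ z w : Circle, γ (z * w) = (γ w).trans (γ z)
  γ_continuous : ∀ x : B, Continuous fun z => γ z x
  γ_s : ∀ (z : Circle) (a : 𝒜), γ z (rep.s a) = (z : ℂ) • rep.s a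
  γ_p : ∀ (z : Circle) (A : Set V), Bbar G L A → γ z (rep.p A) = rep.p A

/-- The representation generates `B` as a C*-algebra. -/
def GeneratesAlg {B : Type*} [NonUnitalCStarAlgebra B]
    (G : DirGraph V E) (L : E → 𝒜) (rep : LRep G L B) : Prop :=
  closure (NonUnitalStarAlgebra.adjoin ℂ
    ({x : B | ∃ a : 𝒜, x = rep.s a} ∪ {x : B | ∃ A : Set V, Bbar G L A ∧ x = rep.p A}) : Set B)
    = Set.univ

/-- A closed two-sided ideal of a C*-algebra (as a set). -/
def IsClosedTwoSidedIdealSet (B : Type*) [NonUnitalNormedRing B] [NormedSpace ℂ B]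
    (I : Set B) : Prop :=
  IsClosed I ∧ (0 : B) ∈ I ∧ (∀ x ∈ I, ∀ y ∈ I, x + y ∈ I) ∧
    (∀ (c : ℂ), ∀ x ∈ I, c • x ∈ I) ∧ ∀ x ∈ I, ∀ y : B, x * y ∈ I ∧ y * x ∈ I

/-- The closed two-sided ideal generated by an element. -/
def closedIdealGen (B : Type*) [NonUnitalNormedRing B] [NormedSpace ℂ B] (q : B) : Set B :=
  ⋂₀ {I : Set B | IsClosedTwoSidedIdealSet B I ∧ q ∈ I}

/-! If `α` is a loop at `A`, then `u = s_α p_A` satisfies `u* u = p_A` and `u u* ≤ p_A`.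
Suppose `u u* = p_A`. Conjugating by the letters of `α` one at a time gives
`p_{r(A, α_{[1,j]})} = s_w p_A s_w*` for the remaining suffix `w = α_{(j,|α|]}`, and in particular
`p_{r(A, α)} = p_A`. Each kind of exit then yields a nonempty `C ∈ 𝔅̄` with `p_C = 0`: a path
leaving `α` through a letter `b ≠ α_{j+1}` gives `C = r(A, α_{[1,j]} b)`, killed by
`s_b* s_{α_{j+1}} = 0`; a sink part `C` is killed by `p_C s_a = s_a p_{r(C, a)} = 0`; and
`A ⊊ r(A, α)` gives `C = r(A, α) \ A`. -/

lemma List.exists_getElem_ne_of_not_prefix {T : Type*} {β γ : List T} (h : ¬ β <+: γ)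
    (hlen : β.length ≤ γ.length) :
    ∃ j, ∃ (hj : j < β.length) (hj' : j < γ.length), β.take j = γ.take j ∧ β[j] ≠ γ[j] := by
  induction β generalizing γ with
  | nil => exact absurd List.nil_prefix h
  | cons b β ih =>
    rcases γ with _ | ⟨c, γ⟩
    · simp at hlen
    rcases eq_or_ne b c with rfl | hbc
    · obtain ⟨j, hj, hj', htake, hne⟩ :=
        ih (fun hpre => h (List.cons_prefix_cons.mpr ⟨rfl, hpre⟩)) (by simpa using hlen)
      exact ⟨j + 1, by simpa using hj, by simpa using hj', by simp [htake], by simpa using hne⟩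
    · exact ⟨0, by simp, by simp, by simp, by simpa using hbc⟩

namespace GPath

variable {G : DirGraph V E} {L : E → 𝒜}

lemma label_ne_nil (p : GPath G) : p.label L ≠ [] := by
  simp [label, p.ne]

lemma length_label (p : GPath G) : (p.label L).length = p.length := by
  simp [label, length]

def single (G : DirGraph V E) (e : E) : GPath G :=
  ⟨[e], List.cons_ne_nil e [], List.isChain_singleton e⟩

lemma exists_append (p q : GPath G) (h : p.range = q.source) :
    ∃ r : GPath G, r.label L = p.label L ++ q.label L ∧
      r.source = p.source ∧ r.range = q.range := by
  refine ⟨⟨p.edges ++ q.edges, by simp [p.ne], ?_⟩, by simp [label], ?_, ?_⟩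
  · refine List.isChain_append.mpr ⟨p.chain, q.chain, ?_⟩
    intro x hx y hy
    rw [List.getLast?_eq_some_getLast p.ne, Option.mem_some_iff] at hx
    rw [List.head?_eq_some_head q.ne, Option.mem_some_iff] at hy
    exact hx ▸ hy ▸ h
  · simp only [source, List.head_append_of_ne_nil p.ne]
  · exact congrArg G.rng (List.getLast_append_of_ne_nil _ q.ne)

lemma exists_split (p : GPath G) {k : ℕ} (h0 : 0 < k) (hk : k < p.length) :
    ∃ q r : GPath G, q.label L = (p.label L).take k ∧ r.label L = (p.label L).drop k ∧
      q.source = p.source ∧ r.range = p.range ∧ q.range = r.source := by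
  have hc : (p.edges.take k ++ p.edges.drop k).IsChain (fun e f => G.rng e = G.src f) :=
    (List.take_append_drop k p.edges).symm ▸ p.chain
  rw [List.isChain_append] at hc
  have htake : p.edges.take k ≠ [] := by simp [p.ne]; omega
  have hdrop : p.edges.drop k ≠ [] := by simp [length] at hk ⊢; omega
  refine ⟨⟨_, htake, hc.1⟩, ⟨_, hdrop, hc.2.1⟩, by simp [label, List.map_take],
    by simp [label, List.map_drop], congrArg G.src (List.head_take ..),
    congrArg G.rng (List.getLast_drop ..), ?_⟩
  exact hc.2.2 _ (by simp [List.getLast?_eq_some_getLast htake]) _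
    (by simp [List.head?_eq_some_head hdrop])

end GPath

section Ranges

variable {G : DirGraph V E} {L : E → 𝒜}

lemma IsLabelWord.singleton_of_mem {w : List 𝒜} (hw : IsLabelWord G L w) {a : 𝒜}
    (ha : a ∈ w) : IsLabelWord G L [a] := by
  obtain ⟨p, rfl⟩ := hw
  obtain ⟨e, -, rfl⟩ := List.mem_map.mp ha
  exact ⟨GPath.single G e, rfl⟩

lemma IsLabelWord.ne_nil {w : List 𝒜} (hw : IsLabelWord G L w) : w ≠ [] := by
  obtain ⟨p, rfl⟩ := hw
  exact p.label_ne_nil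

lemma relRng_empty (w : List 𝒜) : relRng G L ∅ w = ∅ :=
  Set.eq_empty_of_forall_notMem fun _ ⟨_, _, h, _⟩ => h

lemma relRng_eq_empty_of_subset_sinks {C : Set V} (hC : C ⊆ G.sinks) (w : List 𝒜) :
    relRng G L C w = ∅ :=
  Set.eq_empty_of_forall_notMem fun _ ⟨_, _, h, _⟩ => hC h _ rfl

lemma relRng_mono {X Y : Set V} (h : X ⊆ Y) (w : List 𝒜) :
    relRng G L X w ⊆ relRng G L Y w :=
  fun _ ⟨p, h1, h2, h3⟩ => ⟨p, h1, h h2, h3⟩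

lemma relRng_univ (w : List 𝒜) : relRng G L Set.univ w = rngW G L w := by
  ext v
  exact ⟨fun ⟨p, h1, _, h3⟩ => ⟨p, h1, h3⟩, fun ⟨p, h1, h3⟩ => ⟨p, h1, trivial, h3⟩⟩

lemma relRng_subset_rngW (X : Set V) (w : List 𝒜) : relRng G L X w ⊆ rngW G L w :=
  relRng_univ (G := G) (L := L) w ▸ relRng_mono (Set.subset_univ X) w

lemma relRng_append (X : Set V) {v w : List 𝒜} (hv : v ≠ []) (hw : w ≠ []) :
    relRng G L X (v ++ w) = relRng G L (relRng G L X v) w := by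
  ext x
  constructor
  · rintro ⟨p, hp, hpX, rfl⟩
    have hlen : v.length < p.length := by
      rw [← p.length_label (L := L), hp, List.length_append]
      have := List.length_pos_iff.mpr hw
      omega
    obtain ⟨q, r, hq, hr, hqs, hrr, hqr⟩ := p.exists_split (List.length_pos_iff.mpr hv) hlen
    rw [hp, List.take_left] at hq
    rw [hp, List.drop_left] at hr
    exact ⟨r, hr, ⟨q, hq, hqs ▸ hpX, hqr⟩, hrr⟩
  · rintro ⟨r, hr, ⟨q, hq, hqX, hqr⟩, rfl⟩
    obtain ⟨p, hp, hps, hpr⟩ := q.exists_append (L := L) r hqr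
    exact ⟨p, by rw [hp, hq, hr], hps ▸ hqX, hpr⟩

end Ranges

section RelRngNil

variable {G : DirGraph V E} {L : E → 𝒜} {X Y : Set V}

/-- `r(X, w)` with the convention `r(X, ε) = X`; note that `relRng G L X [] = ∅`. -/
def relRng₀ (G : DirGraph V E) (L : E → 𝒜) (X : Set V) (w : List 𝒜) : Set V :=
  if w = [] then X else relRng G L X w

@[simp]
lemma relRng₀_nil : relRng₀ G L X [] = X := if_pos rfl

lemma relRng₀_of_ne_nil {w : List 𝒜} (hw : w ≠ []) : relRng₀ G L X w = relRng G L X w :=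
  if_neg hw

lemma relRng₀_append (X : Set V) (v w : List 𝒜) :
    relRng₀ G L X (v ++ w) = relRng₀ G L (relRng₀ G L X v) w := by
  rcases eq_or_ne v [] with rfl | hv
  · simp
  rcases eq_or_ne w [] with rfl | hw
  · simp
  rw [relRng₀_of_ne_nil (by simp [hv]), relRng₀_of_ne_nil hv, relRng₀_of_ne_nil hw,
    relRng_append X hv hw]

lemma relRng₀_cons (X : Set V) (a : 𝒜) (w : List 𝒜) :
    relRng₀ G L X (a :: w) = relRng₀ G L (relRng G L X [a]) w := by
  rw [← List.singleton_append, relRng₀_append, relRng₀_of_ne_nil (List.cons_ne_nil a [])]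

lemma relRng₀_mono (h : X ⊆ Y) (w : List 𝒜) : relRng₀ G L X w ⊆ relRng₀ G L Y w := by
  rcases eq_or_ne w [] with rfl | hw
  · simpa using h
  · simpa only [relRng₀_of_ne_nil hw] using relRng_mono h w

lemma relRng₀_empty (w : List 𝒜) : relRng₀ G L ∅ w = ∅ := by
  rcases eq_or_ne w [] with rfl | hw
  · simp
  · rw [relRng₀_of_ne_nil hw, relRng_empty]

lemma relRng₀_append_subset (X : Set V) (v w : List 𝒜) :
    relRng₀ G L X (v ++ w) ⊆ relRng₀ G L Set.univ w :=
  relRng₀_append X v w ▸ relRng₀_mono (Set.subset_univ _) w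

lemma rngW_subset_relRng₀_univ_drop (w : List 𝒜) (j : ℕ) :
    rngW G L w ⊆ relRng₀ G L Set.univ (w.drop j) := by
  rcases eq_or_ne w [] with rfl | hw
  · simp
  · rw [← relRng_univ, ← relRng₀_of_ne_nil hw]
    conv_lhs => rw [← List.take_append_drop j w]
    exact relRng₀_append_subset _ _ _

lemma relRng₀_nonempty_of_append {v w : List 𝒜} (h : (relRng₀ G L X (v ++ w)).Nonempty) :
    (relRng₀ G L X v).Nonempty := by
  rw [Set.nonempty_iff_ne_empty] at h ⊢
  rintro hv
  rw [relRng₀_append, hv, relRng₀_empty] at h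
  exact h rfl

lemma Bbar.relRng₀ (hX : Bbar G L X) {w : List 𝒜} (hw : ∀ a ∈ w, IsLabelWord G L [a]) :
    Bbar G L (relRng₀ G L X w) := by
  induction w generalizing X with
  | nil => simpa using hX
  | cons a w ih =>
    rw [relRng₀_cons]
    exact ih (Bbar.rel X [a] hX (hw a List.mem_cons_self))
      fun b hb => hw b (List.mem_cons_of_mem a hb)

end RelRngNil

lemma isStarProjection_mul_star_self_of_mul_star_mul_self {B : Type*} [NonUnitalRing B]
    [StarRing B] {u : B} (h : u * star u * u = u) : IsStarProjection (u * star u) :=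
  ⟨show u * star u * (u * star u) = u * star u by rw [← mul_assoc, h],
    IsSelfAdjoint.mul_star_self u⟩

namespace LRep

variable {B : Type*} [NonUnitalRing B] [StarRing B] {G : DirGraph V E} {L : E → 𝒜}
  (rep : LRep G L B) {A C X Y : Set V} {a b : 𝒜} {w α : List 𝒜}

/-- `s_w x`, with `s_ε x = x` (compare `sWord s [] = 0`). -/
def sMul (w : List 𝒜) (x : B) : B := w.foldr (fun a y => rep.s a * y) x

@[simp]
lemma sMul_nil (x : B) : rep.sMul [] x = x := rfl

@[simp]
lemma sMul_cons (x : B) : rep.sMul (a :: w) x = rep.s a * rep.sMul w x := rfl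

lemma sMul_mul (x y : B) : rep.sMul w x * y = rep.sMul w (x * y) := by
  induction w with
  | nil => rfl
  | cons a w ih => rw [sMul_cons, mul_assoc, ih, sMul_cons]

lemma p_mul_p_of_subset (hX : Bbar G L X) (hY : Bbar G L Y) (h : X ⊆ Y) :
    rep.p X * rep.p Y = rep.p X := by
  rw [rep.p_mul X Y hX hY, Set.inter_eq_left.mpr h]

lemma p_mul_p_of_superset (hX : Bbar G L X) (hY : Bbar G L Y) (h : X ⊆ Y) :
    rep.p Y * rep.p X = rep.p X := by
  rw [rep.p_mul Y X hY hX, Set.inter_eq_right.mpr h]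

lemma isStarProjection_p (hX : Bbar G L X) : IsStarProjection (rep.p X) :=
  ⟨rep.p_mul_p_of_subset hX hX le_rfl, rep.p_sa X hX⟩

lemma p_diff (hX : Bbar G L X) (hY : Bbar G L Y) (h : X ⊆ Y) :
    rep.p (Y \ X) = rep.p Y - rep.p X := by
  have hunion := rep.p_union (Y \ X) X (Bbar.diff Y X hY hX) hX
  rw [Set.sdiff_union_of_subset h, Set.sdiff_inter_self, rep.p_empty, sub_zero] at hunion
  exact eq_sub_of_add_eq hunion.symm

lemma star_s_mul_p_mul_s (hX : Bbar G L X) (ha : IsLabelWord G L [a]) :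
    star (rep.s a) * rep.p X * rep.s a = rep.p (relRng G L X [a]) := by
  rw [mul_assoc, rep.p_s X a hX, ← mul_assoc, rep.s_s,
    rep.p_mul_p_of_superset (Bbar.rel X [a] hX ha) (Bbar.base [a] ha) (relRng_subset_rngW X [a])]

lemma p_mul_sMul (hX : Bbar G L X) (hw : ∀ a ∈ w, IsLabelWord G L [a]) (y : B) :
    rep.p X * rep.sMul w y = rep.sMul w (rep.p (relRng₀ G L X w) * y) := by
  induction w generalizing X with
  | nil => simp
  | cons a w ih =>
    rw [sMul_cons, ← mul_assoc, rep.p_s X a hX, mul_assoc,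
      ih (Bbar.rel X [a] hX (hw a List.mem_cons_self)) fun b hb => hw b (List.mem_cons_of_mem a hb),
      relRng₀_cons, sMul_cons]

lemma p_rngW_mul_sMul_p (hA : Bbar G L A) (hw : ∀ b ∈ a :: w, IsLabelWord G L [b])
    (hAw : A ⊆ relRng₀ G L Set.univ (a :: w)) :
    rep.p (rngW G L [a]) * rep.sMul w (rep.p A) = rep.sMul w (rep.p A) := by
  have ha := hw a List.mem_cons_self
  have hw' : ∀ b ∈ w, IsLabelWord G L [b] := fun b hb => hw b (List.mem_cons_of_mem a hb)
  rw [relRng₀_cons, relRng_univ] at hAw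
  rw [rep.p_mul_sMul (Bbar.base [a] ha) hw',
    rep.p_mul_p_of_superset hA (Bbar.relRng₀ (Bbar.base [a] ha) hw') hAw]

lemma star_s_mul_sMul_p (hA : Bbar G L A) (hw : ∀ b ∈ a :: w, IsLabelWord G L [b])
    (hAw : A ⊆ relRng₀ G L Set.univ (a :: w)) :
    star (rep.s a) * rep.sMul (a :: w) (rep.p A) = rep.sMul w (rep.p A) := by
  rw [sMul_cons, ← mul_assoc, rep.s_s, rep.p_rngW_mul_sMul_p hA hw hAw]

lemma star_sMul_p_mul_sMul_p (hA : Bbar G L A) (hw : ∀ a ∈ w, IsLabelWord G L [a])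
    (hAw : A ⊆ relRng₀ G L Set.univ w) :
    star (rep.sMul w (rep.p A)) * rep.sMul w (rep.p A) = rep.p A := by
  induction w with
  | nil => rw [sMul_nil, rep.p_sa A hA, rep.p_mul_p_of_subset hA hA le_rfl]
  | cons a w ih =>
    calc star (rep.sMul (a :: w) (rep.p A)) * rep.sMul (a :: w) (rep.p A)
        = star (rep.sMul w (rep.p A)) * (star (rep.s a) * rep.sMul (a :: w) (rep.p A)) := by
          rw [sMul_cons, star_mul, mul_assoc]
      _ = star (rep.sMul w (rep.p A)) * rep.sMul w (rep.p A) := by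
          rw [rep.star_s_mul_sMul_p hA hw hAw]
      _ = rep.p A := ih (fun b hb => hw b (List.mem_cons_of_mem a hb))
          (hAw.trans (relRng₀_append_subset Set.univ [a] w))

lemma p_relRng_singleton_eq_sMul_mul_star (hX : Bbar G L X) (hA : Bbar G L A)
    (hw : ∀ b ∈ a :: w, IsLabelWord G L [b]) (hAw : A ⊆ relRng₀ G L Set.univ (a :: w))
    (h : rep.p X = rep.sMul (a :: w) (rep.p A) * star (rep.sMul (a :: w) (rep.p A))) :
    rep.p (relRng G L X [a]) = rep.sMul w (rep.p A) * star (rep.sMul w (rep.p A)) := by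
  rw [← rep.star_s_mul_p_mul_s hX (hw a List.mem_cons_self), h,
    ← rep.star_s_mul_sMul_p hA hw hAw, star_mul, star_star]
  simp only [mul_assoc]

lemma p_relRng_singleton_eq_zero (hX : Bbar G L X) (ha : IsLabelWord G L [a]) (hab : a ≠ b)
    {y : B} (h : rep.p X = rep.s b * y) : rep.p (relRng G L X [a]) = 0 := by
  rw [← rep.star_s_mul_p_mul_s hX ha, h, ← mul_assoc, rep.s_orth a b hab, zero_mul, zero_mul]

lemma p_eq_zero_of_subset_sinks (hC : Bbar G L C) (hX : Bbar G L X) (hCX : C ⊆ X)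
    (hCs : C ⊆ G.sinks) {y : B} (h : rep.p X = rep.s b * y) : rep.p C = 0 := by
  rw [← rep.p_mul_p_of_subset hC hX hCX, h, ← mul_assoc, rep.p_s C b hC,
    relRng_eq_empty_of_subset_sinks hCs, rep.p_empty, mul_zero, zero_mul]

lemma star_sMul_p_mul_sMul_p_of_subset_rngW (hA : Bbar G L A) (hα : IsLabelWord G L α)
    (hAα : A ⊆ rngW G L α) :
    star (rep.sMul α (rep.p A)) * rep.sMul α (rep.p A) = rep.p A :=
  rep.star_sMul_p_mul_sMul_p hA (fun _ ha => hα.singleton_of_mem ha)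
    (by simpa using hAα.trans (rngW_subset_relRng₀_univ_drop α 0))

lemma sMul_p_mul_star_le_p [PartialOrder B] [StarOrderedRing B] (hA : Bbar G L A)
    (hα : IsLabelWord G L α) (hAα : A ⊆ relRng G L A α) :
    rep.sMul α (rep.p A) * star (rep.sMul α (rep.p A)) ≤ rep.p A := by
  have hletters : ∀ a ∈ α, IsLabelWord G L [a] := fun _ ha => hα.singleton_of_mem ha
  have huu := rep.star_sMul_p_mul_sMul_p_of_subset_rngW hA hα
    (hAα.trans (relRng_subset_rngW A α))
  have hu : IsStarProjection (rep.sMul α (rep.p A) * star (rep.sMul α (rep.p A))) :=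
    isStarProjection_mul_star_self_of_mul_star_mul_self
      (by rw [mul_assoc, huu, rep.sMul_mul, rep.p_mul_p_of_subset hA hA le_rfl])
  refine hu.le_of_mul_eq_right (rep.isStarProjection_p hA) ?_
  rw [← mul_assoc, rep.p_mul_sMul hA hletters, relRng₀_of_ne_nil hα.ne_nil,
    rep.p_mul_p_of_superset hA (Bbar.rel A α hA hα) hAα]

lemma p_relRng₀_take_eq_sMul_drop_mul_star (hA : Bbar G L A) (hα : IsLabelWord G L α)
    (hAα : A ⊆ rngW G L α)
    (h : rep.p A = rep.sMul α (rep.p A) * star (rep.sMul α (rep.p A)))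
    {j : ℕ} (hj : j ≤ α.length) :
    rep.p (relRng₀ G L A (α.take j)) =
      rep.sMul (α.drop j) (rep.p A) * star (rep.sMul (α.drop j) (rep.p A)) := by
  induction j with
  | zero => simpa using h
  | succ j ih =>
    have hj : j < α.length := hj
    have hX : Bbar G L (relRng₀ G L A (α.take j)) :=
      Bbar.relRng₀ hA fun a ha => hα.singleton_of_mem (List.mem_of_mem_take ha)
    have hletters : ∀ a ∈ α.drop j, IsLabelWord G L [a] :=
      fun a ha => hα.singleton_of_mem (List.mem_of_mem_drop ha)
    have hAdrop := hAα.trans (rngW_subset_relRng₀_univ_drop α j)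
    rw [List.drop_eq_getElem_cons hj] at hletters hAdrop ih
    rw [List.take_succ_eq_append_getElem hj, relRng₀_append,
      relRng₀_of_ne_nil (List.cons_ne_nil _ _)]
    exact rep.p_relRng_singleton_eq_sMul_mul_star hX hA hletters hAdrop (ih hj.le)

lemma exists_p_relRng₀_take_eq_s_mul (hA : Bbar G L A) (hα : IsLabelWord G L α)
    (hAα : A ⊆ rngW G L α)
    (h : rep.p A = rep.sMul α (rep.p A) * star (rep.sMul α (rep.p A)))
    {j : ℕ} (hj : j ≤ α.length) :
    ∃ b y, rep.p (relRng₀ G L A (α.take j)) = rep.s b * y := by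
  rw [rep.p_relRng₀_take_eq_sMul_drop_mul_star hA hα hAα h hj]
  rcases hj.lt_or_eq with hj | rfl
  · rw [List.drop_eq_getElem_cons hj, sMul_cons, mul_assoc]
    exact ⟨_, _, rfl⟩
  · rw [List.drop_length, sMul_nil, rep.p_sa A hA, rep.p_mul_p_of_subset hA hA le_rfl, h]
    obtain ⟨a, α, rfl⟩ := List.exists_cons_of_ne_nil hα.ne_nil
    rw [sMul_cons, mul_assoc]
    exact ⟨_, _, rfl⟩

lemma exists_p_eq_zero_of_exit_path (hA : Bbar G L A) (hα : IsLabelWord G L α)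
    (hAα : A ⊆ rngW G L α)
    (h : rep.p A = rep.sMul α (rep.p A) * star (rep.sMul α (rep.p A)))
    (hexit : initialSegs α ⊂ labelsFromLe G L A α.length) :
    ∃ C, Bbar G L C ∧ C.Nonempty ∧ rep.p C = 0 := by
  obtain ⟨β, ⟨p, hpA, hplen, rfl⟩, hβα⟩ := Set.exists_of_ssubset hexit
  obtain ⟨j, hjβ, hjα, htake, hne⟩ := List.exists_getElem_ne_of_not_prefix
    (fun hpre => hβα ⟨p.label_ne_nil, hpre⟩) (p.length_label ▸ hplen)
  have hβ : IsLabelWord G L (p.label L) := ⟨p, rfl⟩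
  refine ⟨relRng₀ G L A ((p.label L).take (j + 1)),
    Bbar.relRng₀ hA fun a ha => hβ.singleton_of_mem (List.mem_of_mem_take ha), ?_, ?_⟩
  · refine relRng₀_nonempty_of_append (w := (p.label L).drop (j + 1)) ?_
    rw [List.take_append_drop, relRng₀_of_ne_nil p.label_ne_nil]
    exact ⟨p.range, p, rfl, hpA, rfl⟩
  · have hX := rep.p_relRng₀_take_eq_sMul_drop_mul_star hA hα hAα h hjα.le
    rw [List.drop_eq_getElem_cons hjα, sMul_cons, mul_assoc] at hX
    rw [List.take_succ_eq_append_getElem hjβ, htake, relRng₀_append,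
      relRng₀_of_ne_nil (List.cons_ne_nil _ _)]
    exact rep.p_relRng_singleton_eq_zero
      (Bbar.relRng₀ hA fun a ha => hα.singleton_of_mem (List.mem_of_mem_take ha))
      (hβ.singleton_of_mem (List.getElem_mem hjβ)) hne hX

lemma exists_p_eq_zero_of_exit_sink (hA : Bbar G L A) (hα : IsLabelWord G L α)
    (hAα : A ⊆ rngW G L α)
    (h : rep.p A = rep.sMul α (rep.p A) * star (rep.sMul α (rep.p A)))
    (hexit : ∃ k, 1 ≤ k ∧ k ≤ α.length ∧ (relRng G L A (α.take k) ∩ G.sinks).Nonempty) :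
    ∃ C, Bbar G L C ∧ C.Nonempty ∧ rep.p C = 0 := by
  obtain ⟨k, hk, hkα, hsink⟩ := hexit
  have htake : α.take k ≠ [] := by
    simp only [ne_eq, List.take_eq_nil_iff, not_or]
    exact ⟨by omega, hα.ne_nil⟩
  have hX := Bbar.relRng₀ hA fun a ha => hα.singleton_of_mem (List.mem_of_mem_take (i := k) ha)
  obtain ⟨b, y, hby⟩ := rep.exists_p_relRng₀_take_eq_s_mul hA hα hAα h hkα
  rw [relRng₀_of_ne_nil htake] at hX hby
  exact ⟨_, Bbar.sk _ hX, hsink, rep.p_eq_zero_of_subset_sinks (Bbar.sk _ hX) hX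
    Set.inter_subset_left Set.inter_subset_right hby⟩

lemma exists_p_eq_zero_of_exit_range (hA : Bbar G L A) (hα : IsLabelWord G L α)
    (hAα : A ⊆ rngW G L α)
    (h : rep.p A = rep.sMul α (rep.p A) * star (rep.sMul α (rep.p A)))
    (hexit : A ⊂ relRng G L A α) :
    ∃ C, Bbar G L C ∧ C.Nonempty ∧ rep.p C = 0 := by
  have hR : Bbar G L (relRng G L A α) := Bbar.rel A α hA hα
  have hpR := rep.p_relRng₀_take_eq_sMul_drop_mul_star hA hα hAα h le_rfl
  rw [List.take_length, List.drop_length, sMul_nil, relRng₀_of_ne_nil hα.ne_nil, rep.p_sa A hA,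
    rep.p_mul_p_of_subset hA hA le_rfl] at hpR
  exact ⟨_, Bbar.diff _ _ hR hA, Set.nonempty_of_ssubset hexit,
    by rw [rep.p_diff hA hR hexit.subset, hpR, sub_self]⟩

lemma exists_p_eq_zero_of_hasExitLoop (hA : Bbar G L A) (hα : IsLabelWord G L α)
    (hAα : A ⊆ rngW G L α)
    (h : rep.p A = rep.sMul α (rep.p A) * star (rep.sMul α (rep.p A)))
    (hexit : HasExitLoop G L A α) :
    ∃ C, Bbar G L C ∧ C.Nonempty ∧ rep.p C = 0 := by
  rcases hexit with hexit | hexit | hexit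
  · exact rep.exists_p_eq_zero_of_exit_path hA hα hAα h hexit
  · exact rep.exists_p_eq_zero_of_exit_sink hA hα hAα h hexit
  · exact rep.exists_p_eq_zero_of_exit_range hA hα hAα h hexit

end LRep

theorem loop_with_exit_infinite_projection_general {V E 𝒜 B : Type*}
    [NonUnitalCStarAlgebra B] [PartialOrder B] [StarOrderedRing B]
    (G : DirGraph V E) (L : E → 𝒜)
    (rep : LRep G L B)
    (hp : ∀ C : Set V, Bbar G L C → C.Nonempty → rep.p C ≠ 0)
    (A : Set V) (hA : Bbar G L A) (α : List 𝒜)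
    (hloop : IsLoop G L A α) (hexit : HasExitLoop G L A α) :
    IsInfiniteProjection B (rep.p A) := by
  obtain ⟨⟨p, hpα, -, -⟩, hAR⟩ := hloop
  have hα : IsLabelWord G L α := ⟨p, hpα⟩
  have hAα : A ⊆ rngW G L α := hAR.trans (relRng_subset_rngW A α)
  have hq := rep.isStarProjection_p hA
  refine ⟨hq.isSelfAdjoint, hq.isIdempotentElem, rep.sMul α (rep.p A),
    rep.star_sMul_p_mul_sMul_p_of_subset_rngW hA hα hAα, rep.sMul_p_mul_star_le_p hA hα hAR,
    fun h => ?_⟩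
  obtain ⟨C, hC, hCne, hC0⟩ := rep.exists_p_eq_zero_of_hasExitLoop hA hα hAα h.symm hexit
  exact hp C hC hCne hC0

/-- Proposition 3.5. Let `{s_a, p_A}` be a representation of
`(E, L, 𝔅̄)` in a C*-algebra with `p_C ≠ 0` for every nonempty `C ∈ 𝔅̄`. If
`α` is a loop at `A ∈ 𝔅̄` with an exit, then `p_A` is an infinite
projection. -/
theorem loop_with_exit_infinite_projection {V E 𝒜 B : Type*}
    [Countable V] [Countable E] [Countable 𝒜]
    [NonUnitalCStarAlgebra B] [PartialOrder B] [StarOrderedRing B]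
    (G : DirGraph V E) (L : E → 𝒜) (hL : Function.Surjective L)
    (sa : StandingAssumptions G L)
    (rep : LRep G L B)
    (hp : ∀ C : Set V, Bbar G L C → C.Nonempty → rep.p C ≠ 0)
    (A : Set V) (hA : Bbar G L A) (α : List 𝒜)
    (hloop : IsLoop G L A α) (hexit : HasExitLoop G L A α) :
    IsInfiniteProjection B (rep.p A) :=
  loop_with_exit_infinite_projection_general G L rep hp A hA α hloop hexit

end
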